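/- Let D be a digraph with a clique-cutset C partitioning V \ C into parts B and B' with no arcs between them, and let K₁ ⊆ B ∪ C be a kernel of D[B ∪ C] with K₁ ∩ C = ∅, and K ⊆ B' ∪ C be a kernel of D[B' ∪ C] with K ∩ C = ∅. Then K ∪ K₁ is a kernel of D. -/
import Mathlib


/-- `K₀` is a kernel of the subdigraph of `(V, A)` induced by `W`. -/
def KernelOn {V : Type*} (A : V → V → Prop) (W K₀ : Set V) : Prop :=
  K₀ ⊆ W ∧ (∀ u ∈ K₀, ∀ v ∈ K₀, ¬ A u v) ∧ (∀ u ∈ W, u ∉ K₀ → ∃ v ∈ K₀, A u v)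

/-- Combining kernels of the two sides of a clique-cutset, both avoiding the
cutset, yields a kernel of the whole digraph. -/
theorem clique_cutset_kernel_union {V : Type*}
    (A : V → V → Prop) (C B B' : Set V)
    (hclique : ∀ u ∈ C, ∀ v ∈ C, u ≠ v → A u v ∨ A v u)
    (hpart : B ∪ B' = Set.univ \ C) (hdisj : B ∩ B' = ∅)
    (hBne : B.Nonempty) (hB'ne : B'.Nonempty)
    (hsep : ∀ u ∈ B, ∀ v ∈ B', ¬ A u v ∧ ¬ A v u)
    (K₁ : Set V) (hK₁ : KernelOn A (B ∪ C) K₁) (hK₁C : K₁ ∩ C = ∅)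
    (K : Set V) (hK : KernelOn A (B' ∪ C) K) (hKC : K ∩ C = ∅) :
    KernelOn A Set.univ (K ∪ K₁) := by
  obtain ⟨hK₁W, hK₁stab, hK₁abs⟩ := hK₁
  obtain ⟨hKW, hKstab, hKabs⟩ := hK
  have hK₁B : K₁ ⊆ B := fun u hu => by
    rcases hK₁W hu with h | h
    · exact h
    · exact absurd (Set.mem_inter hu h) (by rw [hK₁C]; exact id)
  have hKB' : K ⊆ B' := fun u hu => by
    rcases hKW hu with h | h
    · exact h
    · exact absurd (Set.mem_inter hu h) (by rw [hKC]; exact id)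
  refine ⟨Set.subset_univ _, ?_, ?_⟩
  · rintro u (hu | hu) v (hv | hv)
    · exact hKstab u hu v hv
    · exact (hsep v (hK₁B hv) u (hKB' hu)).2
    · exact (hsep u (hK₁B hu) v (hKB' hv)).1
    · exact hK₁stab u hu v hv
  · intro u _ hu
    have huK : u ∉ K := fun h => hu (Or.inl h)
    have huK₁ : u ∉ K₁ := fun h => hu (Or.inr h)
    by_cases hc : u ∈ C
    · obtain ⟨v, hv, hAv⟩ := hK₁abs u (Or.inr hc) huK₁
      exact ⟨v, Or.inr hv, hAv⟩
    · have : u ∈ B ∪ B' := by rw [hpart]; exact ⟨trivial, hc⟩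
      rcases this with h | h
      · obtain ⟨v, hv, hAv⟩ := hK₁abs u (Or.inl h) huK₁
        exact ⟨v, Or.inr hv, hAv⟩
      · obtain ⟨v, hv, hAv⟩ := hKabs u (Or.inl h) huK
        exact ⟨v, Or.inl hv, hAv⟩
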